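/- (i) For every z ∈ ℂ and any two solutions f, g of ℋf = zf and ℋg = zg, the Wronskian W[f,g](x) is independent of x ∈ ℝ. (ii) Fix λ ∈ ℝ and let f₁, f₂, f₃, f̃₄ be Jost-type solutions as in the context. Then W[f₁(·,λ), f₂(·,λ)] = 2iλ, W[f₃(·,λ), f̃₄(·,λ)] = −2μ, and W[f₁(·,λ), f₃(·,λ)] = W[f₂(·,λ), f₃(·,λ)] = 0. (iii) If λ ≠ 0, there is a unique pair c₁, c₂ ∈ ℂ such that f₄ := f̃₄(·,λ) − c₁ f₁(·,λ) − c₂ f₂(·,λ) satisfies W[f₁(·,λ), f₄] = W[f₂(·,λ), f₄] = 0; moreover W[f₃(·,λ), f₄] = −2μ. -/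

import Mathlib

noncomputable section

open Real MeasureTheory

/-- The matrix Schrödinger operator `ℋ` acting on `f = (f₁, f₂) : ℝ → ℂ²`:
`ℋf = (−f₁'' + f₁ + V₁f₁ + V₂f₂, f₂'' − f₂ − V₂f₁ − V₁f₂)`. -/
def matH (V₁ V₂ : ℝ → ℝ) (f : ℝ → ℂ × ℂ) (x : ℝ) : ℂ × ℂ :=
  (-(iteratedDeriv 2 (fun y => (f y).1) x) + (f x).1
      + (V₁ x : ℂ) * (f x).1 + (V₂ x : ℂ) * (f x).2,
    iteratedDeriv 2 (fun y => (f y).2) x - (f x).2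
      - (V₂ x : ℂ) * (f x).1 - (V₁ x : ℂ) * (f x).2)

/-- `f` is a (classical, twice continuously differentiable) solution of `ℋf = z f`. -/
def IsSolution (V₁ V₂ : ℝ → ℝ) (z : ℂ) (f : ℝ → ℂ × ℂ) : Prop :=
  ContDiff ℝ 2 f ∧ ∀ x : ℝ, matH V₁ V₂ f x = z • f x

/-- The potentials `V₁, V₂` are smooth, even, and exponentially decaying with rate `γ ∈ (0,1)`,
together with all derivatives. -/
def PotentialHyp (γ : ℝ) (V₁ V₂ : ℝ → ℝ) : Prop :=
  0 < γ ∧ γ < 1 ∧ ContDiff ℝ (⊤ : ℕ∞) V₁ ∧ ContDiff ℝ (⊤ : ℕ∞) V₂ ∧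
    (∀ x, V₁ (-x) = V₁ x) ∧ (∀ x, V₂ (-x) = V₂ x) ∧
    ∀ k : ℕ, ∃ C : ℝ, ∀ x : ℝ,
      |iteratedDeriv k V₁ x| + |iteratedDeriv k V₂ x| ≤ C * Real.exp (-γ * |x|)

/-- `μ(λ) = √(λ² + 2)`. -/
def mu (lam : ℝ) : ℝ := Real.sqrt (lam ^ 2 + 2)

/-- Componentwise complex conjugation of a `ℂ²`-valued function. -/
def conj2 (f : ℝ → ℂ × ℂ) : ℝ → ℂ × ℂ :=
  fun x => (starRingEnd ℂ (f x).1, starRingEnd ℂ (f x).2)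

/-- The (bilinear, unconjugated) Wronskian
`W[f,g](x) = f₁'g₁ + f₂'g₂ − f₁g₁' − f₂g₂'`. -/
def Wr (f g : ℝ → ℂ × ℂ) (x : ℝ) : ℂ :=
  deriv (fun y => (f y).1) x * (g x).1 + deriv (fun y => (f y).2) x * (g x).2
    - (f x).1 * deriv (fun y => (g y).1) x - (f x).2 * deriv (fun y => (g y).2) x

/-- The Jost-type asymptotics of `f₁(·,λ), f₃(·,λ), f̃₄(·,λ)` for a fixed `λ`. -/
def JostAsymp (γ lam : ℝ) (f₁ f₃ f₄t : ℝ → ℂ × ℂ) : Prop :=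
  ∃ x0 C : ℝ, 0 ≤ x0 ∧ 0 < C ∧ ∀ j : ℕ, j ≤ 1 → ∀ x : ℝ, x0 ≤ x →
    ‖iteratedDeriv j
        (fun y : ℝ => Complex.exp (-Complex.I * (lam : ℂ) * (y : ℂ)) • f₁ y
          - ((1 : ℂ), (0 : ℂ))) x‖
      ≤ C * mu lam ^ ((j : ℝ) - 1) * Real.exp (-γ * x) ∧
    ‖iteratedDeriv j
        (fun y : ℝ => Real.exp (mu lam * y) • f₃ y - ((0 : ℂ), (1 : ℂ))) x‖
      ≤ C * mu lam ^ ((j : ℝ) - 1) * Real.exp (-γ * x) ∧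
    ‖iteratedDeriv j
        (fun y : ℝ => Real.exp (-(mu lam) * y) • f₄t y - ((0 : ℂ), (1 : ℂ))) x‖
      ≤ C * mu lam ^ ((j : ℝ) - 1) * Real.exp (-γ * x)

open Filter Topology

namespace Stmt7Aux

lemma hasDerivAt_fst' {f : ℝ → ℂ × ℂ} {f' : ℂ × ℂ} {x : ℝ} (h : HasDerivAt f f' x) :
    HasDerivAt (fun y => (f y).1) f'.1 x :=
  (ContinuousLinearMap.fst ℝ ℂ ℂ).hasFDerivAt.comp_hasDerivAt x h

lemma hasDerivAt_snd' {f : ℝ → ℂ × ℂ} {f' : ℂ × ℂ} {x : ℝ} (h : HasDerivAt f f' x) :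
    HasDerivAt (fun y => (f y).2) f'.2 x :=
  (ContinuousLinearMap.snd ℝ ℂ ℂ).hasFDerivAt.comp_hasDerivAt x h

def conjCLM : ℂ →L[ℝ] ℂ := Complex.conjCLE.toContinuousLinearMap

def ccL : (ℂ × ℂ) →L[ℝ] (ℂ × ℂ) := conjCLM.prodMap conjCLM

lemma conj2_eq (f : ℝ → ℂ × ℂ) : conj2 f = fun y => ccL (f y) := rfl

lemma hasDerivAt_conj {h : ℝ → ℂ} {d : ℂ} {x : ℝ} (hd : HasDerivAt h d x) :
    HasDerivAt (fun y => (starRingEnd ℂ) (h y)) ((starRingEnd ℂ) d) x := by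
  have := conjCLM.hasFDerivAt.comp_hasDerivAt x hd
  exact this

lemma exp_neg_tendsto {m : ℝ} (hm : 0 < m) :
    Tendsto (fun x : ℝ => Real.exp (-m * x)) atTop (𝓝 0) := by
  have h : Tendsto (fun x : ℝ => -m * x) atTop atBot := by
    have h := tendsto_neg_atBot_iff.mpr (tendsto_id.const_mul_atTop hm)
    simpa [neg_mul] using h
  exact Real.tendsto_exp_atBot.comp h

lemma tendsto_of_bound {E : Type*} [SeminormedAddGroup E] {r : ℝ → E} {x0 K m : ℝ}
    (hm : 0 < m) (h : ∀ x, x0 ≤ x → ‖r x‖ ≤ K * Real.exp (-m * x)) :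
    Tendsto r atTop (𝓝 0) := by
  apply squeeze_zero_norm' (Filter.eventually_atTop.2 ⟨x0, h⟩)
  simpa using (exp_neg_tendsto hm).const_mul K

lemma deriv2_of_contDiff {f : ℝ → ℂ} (hf : ContDiff ℝ 2 f) :
    Differentiable ℝ (deriv f) := by
  have h2 : (2 : WithTop ℕ∞) = 1 + 1 := rfl
  rw [h2] at hf
  exact (contDiff_succ_iff_deriv.mp hf).2.2.differentiable one_ne_zero

lemma iteratedDeriv_two {f : ℝ → ℂ} : iteratedDeriv 2 f = deriv (deriv f) := by
  have h : (2 : ℕ) = 1 + 1 := rfl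
  rw [h, iteratedDeriv_succ, iteratedDeriv_one]

lemma wr_self (f : ℝ → ℂ × ℂ) (x : ℝ) : Wr f f x = 0 := by
  simp only [Wr]; ring

lemma wr_antisymm (f g : ℝ → ℂ × ℂ) (x : ℝ) : Wr g f x = -Wr f g x := by
  simp only [Wr]; ring

/-- Part (i): constancy of the Wronskian of two solutions. -/
lemma wr_const {V₁ V₂ : ℝ → ℝ} {z : ℂ} {f g : ℝ → ℂ × ℂ}
    (hf : IsSolution V₁ V₂ z f) (hg : IsSolution V₁ V₂ z g) (x y : ℝ) :
    Wr f g x = Wr f g y := by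
  have key : ∀ t : ℝ, HasDerivAt (Wr f g) 0 t := by
    intro t
    have hfd : Differentiable ℝ f := hf.1.differentiable (by norm_num)
    have hgd : Differentiable ℝ g := hg.1.differentiable (by norm_num)
    have hf1 : ContDiff ℝ 2 (fun y => (f y).1) := (contDiff_fst.comp hf.1)
    have hf2 : ContDiff ℝ 2 (fun y => (f y).2) := (contDiff_snd.comp hf.1)
    have hg1 : ContDiff ℝ 2 (fun y => (g y).1) := (contDiff_fst.comp hg.1)
    have hg2 : ContDiff ℝ 2 (fun y => (g y).2) := (contDiff_snd.comp hg.1)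
    have Hu1 : HasDerivAt (fun y => (f y).1) (deriv (fun y => (f y).1) t) t :=
      (hasDerivAt_fst' (hfd t).hasDerivAt).differentiableAt.hasDerivAt
    have Hu2 : HasDerivAt (fun y => (f y).2) (deriv (fun y => (f y).2) t) t :=
      (hasDerivAt_snd' (hfd t).hasDerivAt).differentiableAt.hasDerivAt
    have Hv1 : HasDerivAt (fun y => (g y).1) (deriv (fun y => (g y).1) t) t :=
      (hasDerivAt_fst' (hgd t).hasDerivAt).differentiableAt.hasDerivAt
    have Hv2 : HasDerivAt (fun y => (g y).2) (deriv (fun y => (g y).2) t) t :=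
      (hasDerivAt_snd' (hgd t).hasDerivAt).differentiableAt.hasDerivAt
    have Hu1' : HasDerivAt (deriv (fun y => (f y).1))
        (deriv (deriv (fun y => (f y).1)) t) t :=
      ((deriv2_of_contDiff hf1) t).hasDerivAt
    have Hu2' : HasDerivAt (deriv (fun y => (f y).2))
        (deriv (deriv (fun y => (f y).2)) t) t :=
      ((deriv2_of_contDiff hf2) t).hasDerivAt
    have Hv1' : HasDerivAt (deriv (fun y => (g y).1))
        (deriv (deriv (fun y => (g y).1)) t) t :=
      ((deriv2_of_contDiff hg1) t).hasDerivAt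
    have Hv2' : HasDerivAt (deriv (fun y => (g y).2))
        (deriv (deriv (fun y => (g y).2)) t) t :=
      ((deriv2_of_contDiff hg2) t).hasDerivAt
    have H := (((Hu1'.mul Hv1).add (Hu2'.mul Hv2)).sub (Hu1.mul Hv1')).sub (Hu2.mul Hv2')
    have ef := hf.2 t
    have eg := hg.2 t
    have ef1 := congrArg Prod.fst ef
    have ef2 := congrArg Prod.snd ef
    have eg1 := congrArg Prod.fst eg
    have eg2 := congrArg Prod.snd eg
    simp only [matH, Prod.smul_fst, Prod.smul_snd, smul_eq_mul, iteratedDeriv_two] at ef1 ef2 eg1 eg2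
    have hD : deriv (deriv fun y => (f y).1) t * (g t).1 +
          deriv (fun y => (f y).1) t * deriv (fun y => (g y).1) t +
          (deriv (deriv fun y => (f y).2) t * (g t).2 +
            deriv (fun y => (f y).2) t * deriv (fun y => (g y).2) t) -
          (deriv (fun y => (f y).1) t * deriv (fun y => (g y).1) t +
            (f t).1 * deriv (deriv fun y => (g y).1) t) -
          (deriv (fun y => (f y).2) t * deriv (fun y => (g y).2) t +
            (f t).2 * deriv (deriv fun y => (g y).2) t) = 0 := by
      have e1 : deriv (deriv fun y => (f y).1) t
          = (f t).1 + (V₁ t : ℂ) * (f t).1 + (V₂ t : ℂ) * (f t).2 - z * (f t).1 := by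
        linear_combination -ef1
      have e2 : deriv (deriv fun y => (f y).2) t
          = z * (f t).2 + (f t).2 + (V₂ t : ℂ) * (f t).1 + (V₁ t : ℂ) * (f t).2 := by
        linear_combination ef2
      have e3 : deriv (deriv fun y => (g y).1) t
          = (g t).1 + (V₁ t : ℂ) * (g t).1 + (V₂ t : ℂ) * (g t).2 - z * (g t).1 := by
        linear_combination -eg1
      have e4 : deriv (deriv fun y => (g y).2) t
          = z * (g t).2 + (g t).2 + (V₂ t : ℂ) * (g t).1 + (V₁ t : ℂ) * (g t).2 := by
        linear_combination eg2
      rw [e1, e2, e3, e4]; ring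
    rw [hD] at H
    exact H
  exact is_const_of_deriv_eq_zero (fun t => (key t).differentiableAt)
    (fun t => (key t).deriv) x y


lemma const_eq_limit {F : ℝ → ℂ} {L : ℂ} (hc : ∀ x y : ℝ, F x = F y)
    (hl : Tendsto F atTop (𝓝 L)) (x : ℝ) : F x = L :=
  tendsto_nhds_unique (tendsto_const_nhds (α := ℝ)) (hl.congr fun y => hc y x)

lemma tendsto_comp_fst {p : ℝ → ℂ × ℂ} (h : Tendsto p atTop (𝓝 0)) :
    Tendsto (fun x => (p x).1) atTop (𝓝 (0 : ℂ)) := by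
  simpa [Function.comp_def] using (continuous_fst.tendsto (0 : ℂ × ℂ)).comp h

lemma tendsto_comp_snd {p : ℝ → ℂ × ℂ} (h : Tendsto p atTop (𝓝 0)) :
    Tendsto (fun x => (p x).2) atTop (𝓝 (0 : ℂ)) := by
  simpa [Function.comp_def] using (continuous_snd.tendsto (0 : ℂ × ℂ)).comp h

/-- Master limit lemma for Wronskians of functions with exponential asymptotics. -/
lemma wr_tendsto {u v p q : ℝ → ℂ × ℂ} {α β L : ℂ} {a b : ℂ × ℂ}
    (hp : Differentiable ℝ p) (hq : Differentiable ℝ q)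
    (hu : ∀ y : ℝ, u y = Complex.exp (α * y) • (a + p y))
    (hv : ∀ y : ℝ, v y = Complex.exp (β * y) • (b + q y))
    (hp0 : Tendsto p atTop (𝓝 0)) (hq0 : Tendsto q atTop (𝓝 0))
    (hp1 : Tendsto (deriv p) atTop (𝓝 0)) (hq1 : Tendsto (deriv q) atTop (𝓝 0))
    (hE : Tendsto (fun x : ℝ => Complex.exp ((α + β) * x)) atTop (𝓝 L)) :
    Tendsto (Wr u v) atTop (𝓝 (L * ((α - β) * (a.1 * b.1 + a.2 * b.2)))) := by
  have hid : ∀ t : ℝ, HasDerivAt (fun y : ℝ => (y : ℂ)) 1 t := fun t => by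
    simpa using (hasDerivAt_id t).ofReal_comp
  have key : ∀ x : ℝ, Wr u v x = Complex.exp ((α + β) * x) *
      ((α * (a.1 + (p x).1) + (deriv p x).1) * (b.1 + (q x).1)
        + (α * (a.2 + (p x).2) + (deriv p x).2) * (b.2 + (q x).2)
        - (a.1 + (p x).1) * (β * (b.1 + (q x).1) + (deriv q x).1)
        - (a.2 + (p x).2) * (β * (b.2 + (q x).2) + (deriv q x).2)) := by
    intro x
    have hexpa : HasDerivAt (fun y : ℝ => Complex.exp (α * y)) (Complex.exp (α * x) * α) x := by
      have h0 : HasDerivAt (fun y : ℝ => α * (y : ℂ)) α x := by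
        simpa using ((hid x).const_mul α)
      exact h0.cexp
    have hexpb : HasDerivAt (fun y : ℝ => Complex.exp (β * y)) (Complex.exp (β * x) * β) x := by
      have h0 : HasDerivAt (fun y : ℝ => β * (y : ℂ)) β x := by
        simpa using ((hid x).const_mul β)
      exact h0.cexp
    have hp1x : HasDerivAt (fun y => (p y).1) ((deriv p x).1) x :=
      hasDerivAt_fst' (hp x).hasDerivAt
    have hp2x : HasDerivAt (fun y => (p y).2) ((deriv p x).2) x :=
      hasDerivAt_snd' (hp x).hasDerivAt
    have hq1x : HasDerivAt (fun y => (q y).1) ((deriv q x).1) x :=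
      hasDerivAt_fst' (hq x).hasDerivAt
    have hq2x : HasDerivAt (fun y => (q y).2) ((deriv q x).2) x :=
      hasDerivAt_snd' (hq x).hasDerivAt
    have hUeq1 : (fun y : ℝ => (u y).1) = fun y : ℝ => Complex.exp (α * y) * (a.1 + (p y).1) :=
      funext fun y => by rw [hu y]; rfl
    have hUeq2 : (fun y : ℝ => (u y).2) = fun y : ℝ => Complex.exp (α * y) * (a.2 + (p y).2) :=
      funext fun y => by rw [hu y]; rfl
    have hVeq1 : (fun y : ℝ => (v y).1) = fun y : ℝ => Complex.exp (β * y) * (b.1 + (q y).1) :=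
      funext fun y => by rw [hv y]; rfl
    have hVeq2 : (fun y : ℝ => (v y).2) = fun y : ℝ => Complex.exp (β * y) * (b.2 + (q y).2) :=
      funext fun y => by rw [hv y]; rfl
    have dU1 : deriv (fun y => (u y).1) x
        = Complex.exp (α * x) * α * (a.1 + (p x).1) + Complex.exp (α * x) * (deriv p x).1 := by
      rw [hUeq1]; exact (hexpa.mul (hp1x.const_add a.1)).deriv
    have dU2 : deriv (fun y => (u y).2) x
        = Complex.exp (α * x) * α * (a.2 + (p x).2) + Complex.exp (α * x) * (deriv p x).2 := by
      rw [hUeq2]; exact (hexpa.mul (hp2x.const_add a.2)).deriv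
    have dV1 : deriv (fun y => (v y).1) x
        = Complex.exp (β * x) * β * (b.1 + (q x).1) + Complex.exp (β * x) * (deriv q x).1 := by
      rw [hVeq1]; exact (hexpb.mul (hq1x.const_add b.1)).deriv
    have dV2 : deriv (fun y => (v y).2) x
        = Complex.exp (β * x) * β * (b.2 + (q x).2) + Complex.exp (β * x) * (deriv q x).2 := by
      rw [hVeq2]; exact (hexpb.mul (hq2x.const_add b.2)).deriv
    have hval1 : (u x).1 = Complex.exp (α * x) * (a.1 + (p x).1) := by rw [hu x]; rfl
    have hval2 : (u x).2 = Complex.exp (α * x) * (a.2 + (p x).2) := by rw [hu x]; rfl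
    have hwal1 : (v x).1 = Complex.exp (β * x) * (b.1 + (q x).1) := by rw [hv x]; rfl
    have hwal2 : (v x).2 = Complex.exp (β * x) * (b.2 + (q x).2) := by rw [hv x]; rfl
    have hEE : Complex.exp ((α + β) * x) = Complex.exp (α * x) * Complex.exp (β * x) := by
      rw [← Complex.exp_add]; ring_nf
    rw [Wr, dU1, dU2, dV1, dV2, hval1, hval2, hwal1, hwal2, hEE]
    ring
  have P1 := tendsto_comp_fst hp0
  have P2 := tendsto_comp_snd hp0
  have Q1 := tendsto_comp_fst hq0
  have Q2 := tendsto_comp_snd hq0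
  have D1 := tendsto_comp_fst hp1
  have D2 := tendsto_comp_snd hp1
  have E1 := tendsto_comp_fst hq1
  have E2 := tendsto_comp_snd hq1
  have hG : Tendsto (fun x : ℝ =>
      (α * (a.1 + (p x).1) + (deriv p x).1) * (b.1 + (q x).1)
        + (α * (a.2 + (p x).2) + (deriv p x).2) * (b.2 + (q x).2)
        - (a.1 + (p x).1) * (β * (b.1 + (q x).1) + (deriv q x).1)
        - (a.2 + (p x).2) * (β * (b.2 + (q x).2) + (deriv q x).2)) atTop
      (𝓝 ((α * (a.1 + 0) + 0) * (b.1 + 0) + (α * (a.2 + 0) + 0) * (b.2 + 0)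
        - (a.1 + 0) * (β * (b.1 + 0) + 0) - (a.2 + 0) * (β * (b.2 + 0) + 0))) :=
    (((((tendsto_const_nhds.add P1).const_mul α).add D1).mul
        (tendsto_const_nhds.add Q1)).add
      ((((tendsto_const_nhds.add P2).const_mul α).add D2).mul
        (tendsto_const_nhds.add Q2))).sub
      ((tendsto_const_nhds.add P1).mul
        (((tendsto_const_nhds.add Q1).const_mul β).add E1)) |>.sub
      ((tendsto_const_nhds.add P2).mul
        (((tendsto_const_nhds.add Q2).const_mul β).add E2))
  have h2 := (hE.mul hG).congr fun x => (key x).symm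
  convert h2 using 2
  ring


lemma iteratedDeriv2_conj {h : ℝ → ℂ} (hh : ContDiff ℝ 2 h) (x : ℝ) :
    iteratedDeriv 2 (fun y => (starRingEnd ℂ) (h y)) x
      = (starRingEnd ℂ) (iteratedDeriv 2 h x) := by
  have hd : Differentiable ℝ h := hh.differentiable (by norm_num)
  have hd' : Differentiable ℝ (deriv h) := deriv2_of_contDiff hh
  have e1 : deriv (fun y => (starRingEnd ℂ) (h y)) = fun y => (starRingEnd ℂ) (deriv h y) :=
    funext fun t => (hasDerivAt_conj (hd t).hasDerivAt).deriv
  rw [iteratedDeriv_two, iteratedDeriv_two, e1]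
  exact (hasDerivAt_conj (hd' x).hasDerivAt).deriv

lemma conj2_contDiff {f : ℝ → ℂ × ℂ} (hf : ContDiff ℝ 2 f) : ContDiff ℝ 2 (conj2 f) := by
  rw [conj2_eq]
  exact ccL.contDiff.comp hf

lemma conj2_isSolution {V₁ V₂ : ℝ → ℝ} {r : ℝ} {f : ℝ → ℂ × ℂ}
    (hf : IsSolution V₁ V₂ (r : ℂ) f) : IsSolution V₁ V₂ (r : ℂ) (conj2 f) := by
  refine ⟨conj2_contDiff hf.1, fun x => ?_⟩
  have h1 := congrArg (fun w : ℂ × ℂ => (starRingEnd ℂ) w.1) (hf.2 x)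
  have h2 := congrArg (fun w : ℂ × ℂ => (starRingEnd ℂ) w.2) (hf.2 x)
  simp only [matH, Prod.smul_fst, Prod.smul_snd, smul_eq_mul, map_add, map_sub, map_neg,
    map_mul, Complex.conj_ofReal] at h1 h2
  have hc1 : ContDiff ℝ 2 (fun y => (f y).1) := contDiff_fst.comp hf.1
  have hc2 : ContDiff ℝ 2 (fun y => (f y).2) := contDiff_snd.comp hf.1
  have g1 : (fun y => (conj2 f y).1) = fun y => (starRingEnd ℂ) ((f y).1) := rfl
  have g2 : (fun y => (conj2 f y).2) = fun y => (starRingEnd ℂ) ((f y).2) := rfl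
  refine Prod.ext ?_ ?_
  · show -(iteratedDeriv 2 (fun y => (conj2 f y).1) x) + (conj2 f x).1
        + (V₁ x : ℂ) * (conj2 f x).1 + (V₂ x : ℂ) * (conj2 f x).2 = ((r : ℂ) • conj2 f x).1
    rw [g1, iteratedDeriv2_conj hc1]
    show -((starRingEnd ℂ) (iteratedDeriv 2 (fun y => (f y).1) x)) + (starRingEnd ℂ) (f x).1
        + (V₁ x : ℂ) * (starRingEnd ℂ) (f x).1 + (V₂ x : ℂ) * (starRingEnd ℂ) (f x).2
        = (r : ℂ) * (starRingEnd ℂ) (f x).1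
    linear_combination h1
  · show iteratedDeriv 2 (fun y => (conj2 f y).2) x - (conj2 f x).2
        - (V₂ x : ℂ) * (conj2 f x).1 - (V₁ x : ℂ) * (conj2 f x).2 = ((r : ℂ) • conj2 f x).2
    rw [g2, iteratedDeriv2_conj hc2]
    show (starRingEnd ℂ) (iteratedDeriv 2 (fun y => (f y).2) x) - (starRingEnd ℂ) (f x).2
        - (V₂ x : ℂ) * (starRingEnd ℂ) (f x).1 - (V₁ x : ℂ) * (starRingEnd ℂ) (f x).2
        = (r : ℂ) * (starRingEnd ℂ) (f x).2
    linear_combination h2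

lemma norm_conj2 (f : ℝ → ℂ × ℂ) (x : ℝ) : ‖conj2 f x‖ = ‖f x‖ := by
  simp [conj2, Prod.norm_def]

lemma conj2_differentiable {f : ℝ → ℂ × ℂ} (hf : Differentiable ℝ f) :
    Differentiable ℝ (conj2 f) := by
  rw [conj2_eq]; exact ccL.differentiable.comp hf

lemma deriv_conj2 {f : ℝ → ℂ × ℂ} (hf : Differentiable ℝ f) (x : ℝ) :
    deriv (conj2 f) x = ccL (deriv f x) := by
  rw [conj2_eq]
  exact (ccL.hasFDerivAt.comp_hasDerivAt x (hf x).hasDerivAt).deriv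

lemma conj2_tendsto {f : ℝ → ℂ × ℂ} (hf : Tendsto f atTop (𝓝 0)) :
    Tendsto (conj2 f) atTop (𝓝 0) := by
  apply squeeze_zero_norm (fun x => le_of_eq (norm_conj2 f x))
  simpa using hf.norm

lemma deriv_conj2_tendsto {f : ℝ → ℂ × ℂ} (hfd : Differentiable ℝ f)
    (hf : Tendsto (deriv f) atTop (𝓝 0)) :
    Tendsto (deriv (conj2 f)) atTop (𝓝 0) := by
  have he : ∀ x, ‖deriv (conj2 f) x‖ = ‖deriv f x‖ := by
    intro x
    rw [deriv_conj2 hfd x]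
    show ‖conj2 (deriv f) x‖ = _
    exact norm_conj2 _ x
  apply squeeze_zero_norm (fun x => le_of_eq (he x))
  simpa using hf.norm

lemma hE_zero {α β : ℂ} (h : α + β = 0) :
    Tendsto (fun x : ℝ => Complex.exp ((α + β) * x)) atTop (𝓝 1) := by
  simp only [h, zero_mul, Complex.exp_zero]
  exact tendsto_const_nhds

lemma hE_neg {α β : ℂ} {m : ℝ} (hm : 0 < m) (h : ∀ x : ℝ, ((α + β) * x).re = -m * x) :
    Tendsto (fun x : ℝ => Complex.exp ((α + β) * x)) atTop (𝓝 0) := by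
  have hb : ∀ x : ℝ, ‖Complex.exp ((α + β) * x)‖ ≤ Real.exp (-m * x) := fun x =>
    le_of_eq (by rw [Complex.norm_exp, h x])
  exact squeeze_zero_norm hb (exp_neg_tendsto hm)

lemma wr_sub_smul₂ {f a b c : ℝ → ℂ × ℂ} {c₁ c₂ : ℂ} {x : ℝ}
    (ha : Differentiable ℝ a) (hb : Differentiable ℝ b) (hc : Differentiable ℝ c) :
    Wr f (fun y => a y - c₁ • b y - c₂ • c y) x
      = Wr f a x - c₁ * Wr f b x - c₂ * Wr f c x := by
  have ha1 : HasDerivAt (fun y => (a y).1) (deriv (fun y => (a y).1) x) x :=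
    (hasDerivAt_fst' (ha x).hasDerivAt).differentiableAt.hasDerivAt
  have ha2 : HasDerivAt (fun y => (a y).2) (deriv (fun y => (a y).2) x) x :=
    (hasDerivAt_snd' (ha x).hasDerivAt).differentiableAt.hasDerivAt
  have hb1 : HasDerivAt (fun y => (b y).1) (deriv (fun y => (b y).1) x) x :=
    (hasDerivAt_fst' (hb x).hasDerivAt).differentiableAt.hasDerivAt
  have hb2 : HasDerivAt (fun y => (b y).2) (deriv (fun y => (b y).2) x) x :=
    (hasDerivAt_snd' (hb x).hasDerivAt).differentiableAt.hasDerivAt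
  have hc1 : HasDerivAt (fun y => (c y).1) (deriv (fun y => (c y).1) x) x :=
    (hasDerivAt_fst' (hc x).hasDerivAt).differentiableAt.hasDerivAt
  have hc2 : HasDerivAt (fun y => (c y).2) (deriv (fun y => (c y).2) x) x :=
    (hasDerivAt_snd' (hc x).hasDerivAt).differentiableAt.hasDerivAt
  have d1 : deriv (fun y => (a y - c₁ • b y - c₂ • c y).1) x
      = deriv (fun y => (a y).1) x - c₁ * deriv (fun y => (b y).1) x
        - c₂ * deriv (fun y => (c y).1) x := by
    have H : HasDerivAt (fun y => (a y - c₁ • b y - c₂ • c y).1)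
        (deriv (fun y => (a y).1) x - c₁ * deriv (fun y => (b y).1) x
          - c₂ * deriv (fun y => (c y).1) x) x :=
      (ha1.sub (hb1.const_mul c₁)).sub (hc1.const_mul c₂)
    exact H.deriv
  have d2 : deriv (fun y => (a y - c₁ • b y - c₂ • c y).2) x
      = deriv (fun y => (a y).2) x - c₁ * deriv (fun y => (b y).2) x
        - c₂ * deriv (fun y => (c y).2) x := by
    have H : HasDerivAt (fun y => (a y - c₁ • b y - c₂ • c y).2)
        (deriv (fun y => (a y).2) x - c₁ * deriv (fun y => (b y).2) x
          - c₂ * deriv (fun y => (c y).2) x) x :=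
      (ha2.sub (hb2.const_mul c₁)).sub (hc2.const_mul c₂)
    exact H.deriv
  simp only [Wr]
  rw [d1, d2]
  simp only [Prod.fst_sub, Prod.snd_sub, Prod.smul_fst, Prod.smul_snd, smul_eq_mul]
  ring

end Stmt7Aux

open Stmt7Aux in
theorem stmt_7 (γ : ℝ) (V₁ V₂ : ℝ → ℝ) (hV : PotentialHyp γ V₁ V₂) :
    (∀ z : ℂ, ∀ f g : ℝ → ℂ × ℂ, IsSolution V₁ V₂ z f → IsSolution V₁ V₂ z g →
      ∀ x y : ℝ, Wr f g x = Wr f g y) ∧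
    (∀ lam : ℝ, ∀ f₁ f₃ f₄t : ℝ → ℂ × ℂ,
      IsSolution V₁ V₂ (((1 + lam ^ 2 : ℝ) : ℂ)) f₁ →
      IsSolution V₁ V₂ (((1 + lam ^ 2 : ℝ) : ℂ)) f₃ →
      IsSolution V₁ V₂ (((1 + lam ^ 2 : ℝ) : ℂ)) f₄t →
      JostAsymp γ lam f₁ f₃ f₄t →
      (∀ x : ℝ, Wr f₁ (conj2 f₁) x = 2 * Complex.I * (lam : ℂ)) ∧
      (∀ x : ℝ, Wr f₃ f₄t x = -2 * ((mu lam : ℝ) : ℂ)) ∧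
      (∀ x : ℝ, Wr f₁ f₃ x = 0) ∧
      (∀ x : ℝ, Wr (conj2 f₁) f₃ x = 0) ∧
      (lam ≠ 0 →
        (∃! c : ℂ × ℂ,
          (∀ x : ℝ, Wr f₁ (fun y => f₄t y - c.1 • f₁ y - c.2 • conj2 f₁ y) x = 0) ∧
          (∀ x : ℝ, Wr (conj2 f₁) (fun y => f₄t y - c.1 • f₁ y - c.2 • conj2 f₁ y) x = 0)) ∧
        (∀ c₁ c₂ : ℂ,
          ((∀ x : ℝ, Wr f₁ (fun y => f₄t y - c₁ • f₁ y - c₂ • conj2 f₁ y) x = 0) ∧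
           (∀ x : ℝ, Wr (conj2 f₁) (fun y => f₄t y - c₁ • f₁ y - c₂ • conj2 f₁ y) x = 0)) →
          ∀ x : ℝ,
            Wr f₃ (fun y => f₄t y - c₁ • f₁ y - c₂ • conj2 f₁ y) x
              = -2 * ((mu lam : ℝ) : ℂ)))) := by
  obtain ⟨hγ0, hγ1, -⟩ := hV
  refine ⟨fun z f g hf hg x y => wr_const hf hg x y, ?_⟩
  intro lam f₁ f₃ f₄t h1 h3 h4 hJ
  obtain ⟨x0, C, hx0, hC, hbd⟩ := hJ
  have hμ : 0 < mu lam := Real.sqrt_pos.mpr (by positivity)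
  set p1 : ℝ → ℂ × ℂ :=
    (fun y : ℝ => Complex.exp (-Complex.I * (lam : ℂ) * (y : ℂ)) • f₁ y
      - ((1 : ℂ), (0 : ℂ))) with hp1def
  set p3 : ℝ → ℂ × ℂ :=
    (fun y : ℝ => Real.exp (mu lam * y) • f₃ y - ((0 : ℂ), (1 : ℂ))) with hp3def
  set p4 : ℝ → ℂ × ℂ :=
    (fun y : ℝ => Real.exp (-(mu lam) * y) • f₄t y - ((0 : ℂ), (1 : ℂ))) with hp4def
  have hf₁d : Differentiable ℝ f₁ := h1.1.differentiable (by norm_num)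
  have hf₃d : Differentiable ℝ f₃ := h3.1.differentiable (by norm_num)
  have hf₄d : Differentiable ℝ f₄t := h4.1.differentiable (by norm_num)
  have hod : Differentiable ℝ (fun y : ℝ => (y : ℂ)) := fun t =>
    (show HasDerivAt (fun y : ℝ => (y : ℂ)) 1 t by
      simpa using (hasDerivAt_id t).ofReal_comp).differentiableAt
  have hp1d : Differentiable ℝ p1 := by
    rw [hp1def]
    exact (((hod.const_mul (-Complex.I * (lam : ℂ))).cexp).smul hf₁d).sub_const _
  have hp3d : Differentiable ℝ p3 := by
    rw [hp3def]
    exact (((differentiable_id.const_mul (mu lam)).exp).smul hf₃d).sub_const _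
  have hp4d : Differentiable ℝ p4 := by
    rw [hp4def]
    exact (((differentiable_id.const_mul (-(mu lam))).exp).smul hf₄d).sub_const _
  -- tendsto facts
  have hp1t : Tendsto p1 atTop (𝓝 0) := by
    refine tendsto_of_bound (x0 := x0) (K := C * mu lam ^ (((0 : ℕ) : ℝ) - 1)) hγ0 (fun x hx => ?_)
    have h := (hbd 0 (by norm_num) x hx).1
    simpa [iteratedDeriv_zero] using h
  have hp3t : Tendsto p3 atTop (𝓝 0) := by
    refine tendsto_of_bound (x0 := x0) (K := C * mu lam ^ (((0 : ℕ) : ℝ) - 1)) hγ0 (fun x hx => ?_)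
    have h := (hbd 0 (by norm_num) x hx).2.1
    simpa [iteratedDeriv_zero] using h
  have hp4t : Tendsto p4 atTop (𝓝 0) := by
    refine tendsto_of_bound (x0 := x0) (K := C * mu lam ^ (((0 : ℕ) : ℝ) - 1)) hγ0 (fun x hx => ?_)
    have h := (hbd 0 (by norm_num) x hx).2.2
    simpa [iteratedDeriv_zero] using h
  have hp1t' : Tendsto (deriv p1) atTop (𝓝 0) := by
    refine tendsto_of_bound (x0 := x0) (K := C * mu lam ^ (((1 : ℕ) : ℝ) - 1)) hγ0 (fun x hx => ?_)
    have h := (hbd 1 le_rfl x hx).1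
    simpa [iteratedDeriv_one] using h
  have hp3t' : Tendsto (deriv p3) atTop (𝓝 0) := by
    refine tendsto_of_bound (x0 := x0) (K := C * mu lam ^ (((1 : ℕ) : ℝ) - 1)) hγ0 (fun x hx => ?_)
    have h := (hbd 1 le_rfl x hx).2.1
    simpa [iteratedDeriv_one] using h
  have hp4t' : Tendsto (deriv p4) atTop (𝓝 0) := by
    refine tendsto_of_bound (x0 := x0) (K := C * mu lam ^ (((1 : ℕ) : ℝ) - 1)) hγ0 (fun x hx => ?_)
    have h := (hbd 1 le_rfl x hx).2.2
    simpa [iteratedDeriv_one] using h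
  -- representation identities
  have hu1 : ∀ y : ℝ, f₁ y
      = Complex.exp ((Complex.I * (lam : ℂ)) * y) • (((1 : ℂ), (0 : ℂ)) + p1 y) := by
    intro y
    rw [hp1def]
    have h : ((1 : ℂ), (0 : ℂ))
        + (Complex.exp (-Complex.I * (lam : ℂ) * (y : ℂ)) • f₁ y - ((1 : ℂ), (0 : ℂ)))
        = Complex.exp (-Complex.I * (lam : ℂ) * (y : ℂ)) • f₁ y := by abel
    rw [h, smul_smul, ← Complex.exp_add,
      show Complex.I * (lam : ℂ) * (y : ℂ) + -Complex.I * (lam : ℂ) * (y : ℂ) = 0 by ring,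
      Complex.exp_zero, one_smul]
  have hu3 : ∀ y : ℝ, f₃ y
      = Complex.exp ((-((mu lam : ℝ) : ℂ)) * y) • (((0 : ℂ), (1 : ℂ)) + p3 y) := by
    intro y
    rw [hp3def]
    have h : ((0 : ℂ), (1 : ℂ)) + (Real.exp (mu lam * y) • f₃ y - ((0 : ℂ), (1 : ℂ)))
        = Real.exp (mu lam * y) • f₃ y := by abel
    rw [h, ← algebraMap_smul ℂ (Real.exp (mu lam * y)) (f₃ y)]
    rw [show algebraMap ℝ ℂ (Real.exp (mu lam * y)) = Complex.exp ((mu lam * y : ℝ) : ℂ) by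
      rw [Complex.coe_algebraMap, Complex.ofReal_exp]]
    rw [smul_smul, ← Complex.exp_add,
      show -((mu lam : ℝ) : ℂ) * (y : ℂ) + ((mu lam * y : ℝ) : ℂ) = 0 by push_cast; ring,
      Complex.exp_zero, one_smul]
  have hu4 : ∀ y : ℝ, f₄t y
      = Complex.exp ((((mu lam : ℝ) : ℂ)) * y) • (((0 : ℂ), (1 : ℂ)) + p4 y) := by
    intro y
    rw [hp4def]
    have h : ((0 : ℂ), (1 : ℂ)) + (Real.exp (-(mu lam) * y) • f₄t y - ((0 : ℂ), (1 : ℂ)))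
        = Real.exp (-(mu lam) * y) • f₄t y := by abel
    rw [h, ← algebraMap_smul ℂ (Real.exp (-(mu lam) * y)) (f₄t y)]
    rw [show algebraMap ℝ ℂ (Real.exp (-(mu lam) * y)) = Complex.exp ((-(mu lam) * y : ℝ) : ℂ) by
      rw [Complex.coe_algebraMap, Complex.ofReal_exp]]
    rw [smul_smul, ← Complex.exp_add,
      show ((mu lam : ℝ) : ℂ) * (y : ℂ) + ((-(mu lam) * y : ℝ) : ℂ) = 0 by push_cast; ring,
      Complex.exp_zero, one_smul]
  have hcv : ∀ y : ℝ, conj2 f₁ y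
      = Complex.exp ((-(Complex.I * (lam : ℂ))) * y) • (((1 : ℂ), (0 : ℂ)) + conj2 p1 y) := by
    intro y
    refine Prod.ext ?_ ?_
    · show (starRingEnd ℂ) ((f₁ y).1)
        = Complex.exp (-(Complex.I * (lam : ℂ)) * y) * (1 + (starRingEnd ℂ) ((p1 y).1))
      rw [show (f₁ y).1 = Complex.exp ((Complex.I * (lam : ℂ)) * y) * (1 + (p1 y).1) by
        rw [hu1 y]; rfl]
      rw [map_mul, map_add, map_one, ← Complex.exp_conj]
      congr 2
      simp [map_mul, Complex.conj_ofReal]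
    · show (starRingEnd ℂ) ((f₁ y).2)
        = Complex.exp (-(Complex.I * (lam : ℂ)) * y) * (0 + (starRingEnd ℂ) ((p1 y).2))
      rw [show (f₁ y).2 = Complex.exp ((Complex.I * (lam : ℂ)) * y) * (0 + (p1 y).2) by
        rw [hu1 y]; rfl]
      rw [map_mul, map_add, map_zero, ← Complex.exp_conj]
      congr 2
      simp [map_mul, Complex.conj_ofReal]
  have hc1d : Differentiable ℝ (conj2 p1) := conj2_differentiable hp1d
  have hc1t : Tendsto (conj2 p1) atTop (𝓝 0) := conj2_tendsto hp1t
  have hc1t' : Tendsto (deriv (conj2 p1)) atTop (𝓝 0) := deriv_conj2_tendsto hp1d hp1t'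
  have hconjsol : IsSolution V₁ V₂ (((1 + lam ^ 2 : ℝ) : ℂ)) (conj2 f₁) := conj2_isSolution h1
  -- the four Wronskian values
  have W12 := wr_tendsto (α := Complex.I * (lam : ℂ)) (β := -(Complex.I * (lam : ℂ)))
    (a := ((1 : ℂ), (0 : ℂ))) (b := ((1 : ℂ), (0 : ℂ))) (L := 1)
    hp1d hc1d hu1 hcv hp1t hc1t hp1t' hc1t' (hE_zero (by ring))
  have W34 := wr_tendsto (α := -((mu lam : ℝ) : ℂ)) (β := ((mu lam : ℝ) : ℂ))
    (a := ((0 : ℂ), (1 : ℂ))) (b := ((0 : ℂ), (1 : ℂ))) (L := 1)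
    hp3d hp4d hu3 hu4 hp3t hp4t hp3t' hp4t' (hE_zero (by ring))
  have W13 := wr_tendsto (α := Complex.I * (lam : ℂ)) (β := -((mu lam : ℝ) : ℂ))
    (a := ((1 : ℂ), (0 : ℂ))) (b := ((0 : ℂ), (1 : ℂ))) (L := 0)
    hp1d hp3d hu1 hu3 hp1t hp3t hp1t' hp3t'
    (hE_neg hμ (fun x => by
      simp [Complex.add_re, Complex.mul_re, Complex.I_re, Complex.I_im,
        Complex.ofReal_re, Complex.ofReal_im, Complex.neg_re, Complex.neg_im]))
  have W23 := wr_tendsto (α := -(Complex.I * (lam : ℂ))) (β := -((mu lam : ℝ) : ℂ))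
    (a := ((1 : ℂ), (0 : ℂ))) (b := ((0 : ℂ), (1 : ℂ))) (L := 0)
    hc1d hp3d hcv hu3 hc1t hp3t hc1t' hp3t'
    (hE_neg hμ (fun x => by
      simp [Complex.add_re, Complex.mul_re, Complex.I_re, Complex.I_im,
        Complex.ofReal_re, Complex.ofReal_im, Complex.neg_re, Complex.neg_im]))
  have hW12val : ∀ x : ℝ, Wr f₁ (conj2 f₁) x = 2 * Complex.I * (lam : ℂ) := by
    intro x
    rw [const_eq_limit (fun x y => wr_const h1 hconjsol x y) W12 x]
    simp
    ring
  have hW34val : ∀ x : ℝ, Wr f₃ f₄t x = -2 * ((mu lam : ℝ) : ℂ) := by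
    intro x
    rw [const_eq_limit (fun x y => wr_const h3 h4 x y) W34 x]
    simp
    ring
  have hW13val : ∀ x : ℝ, Wr f₁ f₃ x = 0 := by
    intro x
    rw [const_eq_limit (fun x y => wr_const h1 h3 x y) W13 x]
    simp
  have hW23val : ∀ x : ℝ, Wr (conj2 f₁) f₃ x = 0 := by
    intro x
    rw [const_eq_limit (fun x y => wr_const hconjsol h3 x y) W23 x]
    simp
  refine ⟨hW12val, hW34val, hW13val, hW23val, fun hlam => ?_⟩
  have hconjd : Differentiable ℝ (conj2 f₁) := conj2_differentiable hf₁d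
  have h2Il : (2 * Complex.I * (lam : ℂ)) ≠ 0 :=
    mul_ne_zero (mul_ne_zero two_ne_zero Complex.I_ne_zero) (Complex.ofReal_ne_zero.mpr hlam)
  have hexpA : ∀ (c₁ c₂ : ℂ) (x : ℝ),
      Wr f₁ (fun y => f₄t y - c₁ • f₁ y - c₂ • conj2 f₁ y) x
        = Wr f₁ f₄t 0 - c₂ * (2 * Complex.I * (lam : ℂ)) := by
    intro c₁ c₂ x
    rw [wr_sub_smul₂ hf₄d hf₁d hconjd, wr_const h1 h4 x 0, wr_self, hW12val x]
    ring
  have hexpB : ∀ (c₁ c₂ : ℂ) (x : ℝ),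
      Wr (conj2 f₁) (fun y => f₄t y - c₁ • f₁ y - c₂ • conj2 f₁ y) x
        = Wr (conj2 f₁) f₄t 0 + c₁ * (2 * Complex.I * (lam : ℂ)) := by
    intro c₁ c₂ x
    rw [wr_sub_smul₂ hf₄d hf₁d hconjd, wr_const hconjsol h4 x 0, wr_self,
      wr_antisymm f₁ (conj2 f₁) x, hW12val x]
    ring
  constructor
  · refine ⟨(-(Wr (conj2 f₁) f₄t 0) / (2 * Complex.I * (lam : ℂ)),
      Wr f₁ f₄t 0 / (2 * Complex.I * (lam : ℂ))), ⟨fun x => ?_, fun x => ?_⟩, ?_⟩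
    · rw [hexpA]; field_simp [Complex.ofReal_ne_zero.mpr hlam]; ring
    · rw [hexpB]; field_simp [Complex.ofReal_ne_zero.mpr hlam]; ring
    · rintro ⟨d₁, d₂⟩ ⟨hd1, hd2⟩
      have e2 : Wr f₁ f₄t 0 - d₂ * (2 * Complex.I * (lam : ℂ)) = 0 :=
        (hexpA d₁ d₂ 0).symm.trans (hd1 0)
      have e1 : Wr (conj2 f₁) f₄t 0 + d₁ * (2 * Complex.I * (lam : ℂ)) = 0 :=
        (hexpB d₁ d₂ 0).symm.trans (hd2 0)
      refine Prod.ext ?_ ?_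
      · show d₁ = -(Wr (conj2 f₁) f₄t 0) / (2 * Complex.I * (lam : ℂ))
        field_simp [Complex.ofReal_ne_zero.mpr hlam]
        linear_combination e1
      · show d₂ = Wr f₁ f₄t 0 / (2 * Complex.I * (lam : ℂ))
        field_simp [Complex.ofReal_ne_zero.mpr hlam]
        linear_combination -e2
  · intro c₁ c₂ _ x
    have h31 : Wr f₃ f₁ x = 0 := by rw [wr_antisymm f₁ f₃ x, hW13val x, neg_zero]
    have h3c : Wr f₃ (conj2 f₁) x = 0 := by
      rw [wr_antisymm (conj2 f₁) f₃ x, hW23val x, neg_zero]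
    rw [wr_sub_smul₂ hf₄d hf₁d hconjd, hW34val x, h31, h3c]
    ring
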